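/- On a three-dimensional f-cosymplectic manifold admitting a Ricci soliton (more generally, where the contracted Bianchi identity Σᵢ[(∇_Z Ric)(eᵢ,eᵢ) − 2(∇_{eᵢ} Ric)(eᵢ,Z)] = 0 holds), the scalar curvature satisfies 2ξ(f̃) + ξ(R)/2 + 2(3f̃ + R/2) f = 0. -/

import Mathlib

/-!
Put `Z = ξ` in the contracted Bianchi identity and evaluate both traces in the adapted frame
with (3.6): `Σᵢ (∇_ξ Ric)(eᵢ, eᵢ) = ξ(R)` and `Σᵢ (∇_{eᵢ} Ric)(eᵢ, ξ) = -2ξ(f̃) - 2(3f̃ + R/2)f`.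
The identity is then twice the claimed relation, and 2 is invertible.
-/

/-- `(∇_X Ric)(Y, Z)` as given by (3.6), with `act X u` standing for `X(u)`. -/
def fCosymplecticRicDeriv {C : Type*} [CommRing C] [Invertible (2 : C)] {V : Type*}
    (g : V → V → C) (φ : V → V) (η : V → C) (f ft scal : C) (act : V → C → C)
    (X Y Z : V) : C :=
  (-(3:C) * act X ft - ⅟(2:C) * act X scal) * η Y * η Z
    + (-(3:C) * ft - ⅟(2:C) * scal) * f * g (φ X) (φ Y) * η Z
    + (-(3:C) * ft - ⅟(2:C) * scal) * f * η Y * g (φ X) (φ Z)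
    + (act X ft + ⅟(2:C) * act X scal) * g Y Z

structure IsReebAdaptedFrame {C : Type*} [CommRing C] {V : Type*}
    (g : V → V → C) (η : V → C) (ξ : V) (e : Fin 3 → V) : Prop where
  orthonormal : ∀ i j, g (e i) (e j) = if i = j then 1 else 0
  two_eq : e 2 = ξ
  eta_apply : ∀ i, η (e i) = if i = 2 then 1 else 0

section

variable {C : Type*} [CommRing C] [Invertible (2 : C)] {V : Type*}
  {g : V → V → C} {φ : V → V} {ξ : V} {η : V → C} {e : Fin 3 → V}

theorem IsReebAdaptedFrame.sum_ricDeriv_reeb_frame_frame (he : IsReebAdaptedFrame g η ξ e)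
    (hcompat : ∀ X Y, g (φ X) (φ Y) = g X Y - η X * η Y) (f ft scal : C) (act : V → C → C) :
    ∑ i, fCosymplecticRicDeriv g φ η f ft scal act ξ (e i) (e i) = act ξ scal := by
  obtain ⟨horth, rfl, hηe⟩ := he
  simp only [fCosymplecticRicDeriv, Fin.sum_univ_three, hcompat, horth, hηe, Fin.isValue,
    Fin.reduceEq, ↓reduceIte, mul_one, mul_zero, add_zero, zero_add, sub_self]
  linear_combination act (e 2) scal * invOf_mul_self (2:C)

theorem IsReebAdaptedFrame.sum_ricDeriv_frame_frame_reeb (he : IsReebAdaptedFrame g η ξ e)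
    (hcompat : ∀ X Y, g (φ X) (φ Y) = g X Y - η X * η Y) (f ft scal : C) (act : V → C → C) :
    ∑ i, fCosymplecticRicDeriv g φ η f ft scal act (e i) (e i) ξ
      = -2 * act ξ ft - 2 * (3 * ft + ⅟(2:C) * scal) * f := by
  obtain ⟨horth, rfl, hηe⟩ := he
  simp only [fCosymplecticRicDeriv, Fin.sum_univ_three, hcompat, horth, hηe, Fin.isValue,
    Fin.reduceEq, ↓reduceIte, mul_one, mul_zero, add_zero, zero_add, sub_self]
  ring

end

theorem three_dim_f_cosymplectic_scalar_relation_general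
    {C : Type*} [CommRing C] [Invertible (2 : C)]
    {V : Type*}
    (g : V → V → C) (φ : V → V) (ξ : V) (η : V → C) (f ft scal : C)
    (act : V → C → C) (nablaRic : V → V → V → C)
    (e : Fin 3 → V)
    (horth : ∀ i j, g (e i) (e j) = if i = j then 1 else 0)
    (he2 : e 2 = ξ)
    (hηe : ∀ i, η (e i) = if i = 2 then 1 else 0)
    (hcompat : ∀ X Y, g (φ X) (φ Y) = g X Y - η X * η Y)
    -- (3.6): the covariant derivative of the Ricci tensor
    (hNablaRic : ∀ X Y Z, nablaRic X Y Z
        = (-(3:C) * act X ft - ⅟(2:C) * act X scal) * η Y * η Z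
          + (-(3:C) * ft - ⅟(2:C) * scal) * f * g (φ X) (φ Y) * η Z
          + (-(3:C) * ft - ⅟(2:C) * scal) * f * η Y * g (φ X) (φ Z)
          + (act X ft + ⅟(2:C) * act X scal) * g Y Z)
    -- the contracted second Bianchi identity (3.7)
    (hContr : ∀ Z,
        ∑ i, (nablaRic Z (e i) (e i) - 2 * nablaRic (e i) (e i) Z) = 0) :
    2 * act ξ ft + ⅟(2:C) * act ξ scal
      + 2 * (3 * ft + ⅟(2:C) * scal) * f = 0 := by
  obtain rfl : nablaRic = fCosymplecticRicDeriv g φ η f ft scal act := by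
    funext X Y Z
    exact hNablaRic X Y Z
  have he : IsReebAdaptedFrame g η ξ e := ⟨horth, he2, hηe⟩
  have hBianchi := hContr ξ
  rw [Finset.sum_sub_distrib, ← Finset.mul_sum, he.sum_ricDeriv_reeb_frame_frame hcompat,
    he.sum_ricDeriv_frame_frame_reeb hcompat] at hBianchi
  have htwice : 2 * (2 * act ξ ft + ⅟(2:C) * act ξ scal
      + 2 * (3 * ft + ⅟(2:C) * scal) * f) = 0 := by
    linear_combination hBianchi + act ξ scal * mul_invOf_self (2:C)
  exact (isUnit_of_invertible (2:C)).mul_right_eq_zero.mp htwice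

/-- On a three-dimensional f-cosymplectic manifold admitting a Ricci
soliton (more generally, where the contracted Bianchi identity
`Σᵢ[(∇_Z Ric)(eᵢ,eᵢ) − 2(∇_{eᵢ} Ric)(eᵢ,Z)] = 0` holds), the scalar curvature
satisfies `2ξ(f̃) + ξ(R)/2 + 2(3f̃ + R/2) f = 0`.  Here `ft = f̃ = ξ(f) + f²`,
the Ricci tensor has the form given by Lemma 2.5, its covariant derivative is given
by (3.6), and `{e₀, e₁, e₂ = ξ}` is a local orthonormal frame. -/
theorem three_dim_f_cosymplectic_scalar_relation
    {C : Type*} [CommRing C] [Invertible (2 : C)]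
    {V : Type*} [AddCommGroup V] [Module C V]
    (g : V → V → C) (φ : V → V) (ξ : V) (η : V → C) (f ft scal : C)
    (act : V → C → C) (Ric : V → V → C) (nablaRic : V → V → V → C)
    (e : Fin 3 → V)
    (horth : ∀ i j, g (e i) (e j) = if i = j then 1 else 0)
    (he2 : e 2 = ξ)
    (hηe : ∀ i, η (e i) = if i = 2 then 1 else 0)
    (hηξ : η ξ = 1)
    (hft : ft = act ξ f + f * f)
    (hcompat : ∀ X Y, g (φ X) (φ Y) = g X Y - η X * η Y)
    -- Lemma 2.5: the Ricci tensor of a 3-dimensional f-cosymplectic manifold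
    (hRicForm : ∀ Y Z, Ric Y Z
        = (-(3:C) * ft - ⅟(2:C) * scal) * η Y * η Z
          + (ft + ⅟(2:C) * scal) * g Y Z)
    -- (3.6): the covariant derivative of the Ricci tensor
    (hNablaRic : ∀ X Y Z, nablaRic X Y Z
        = (-(3:C) * act X ft - ⅟(2:C) * act X scal) * η Y * η Z
          + (-(3:C) * ft - ⅟(2:C) * scal) * f * g (φ X) (φ Y) * η Z
          + (-(3:C) * ft - ⅟(2:C) * scal) * f * η Y * g (φ X) (φ Z)
          + (act X ft + ⅟(2:C) * act X scal) * g Y Z)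
    -- the contracted second Bianchi identity (3.7)
    (hContr : ∀ Z,
        ∑ i, (nablaRic Z (e i) (e i) - 2 * nablaRic (e i) (e i) Z) = 0) :
    2 * act ξ ft + ⅟(2:C) * act ξ scal
      + 2 * (3 * ft + ⅟(2:C) * scal) * f = 0 :=
  three_dim_f_cosymplectic_scalar_relation_general g φ ξ η f ft scal act nablaRic e horth he2 hηe
    hcompat hNablaRic hContr
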